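/- Let σ > 0, ε ∈ ℝ, z ∈ ℝ, and let μ_x, μ̂ be real numbers with μ̂ ≥ μ_x − ε. Set Δ_C := ε + σ·z/√n for a natural number n ≥ 1, and let X_1, …, X_n be independent real random variables on a probability space (Ω, P), each with law gaussianReal μ_x σ². Then the false-alarm probability satisfies P( (1/n)·Σ_{i=1}^n X_i ≥ μ̂ + Δ_C ) ≤ 1 − Φ(z), where Φ is the cumulative distribution function of gaussianReal 0 1. -/

import Mathlib

open MeasureTheory ProbabilityTheory Real Set
open scoped NNReal

/-! The sample mean of `n` independent `N(μₓ, σ²)` variables is `N(μₓ, σ²/n)`. Since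
`μ̂ + Δ_C ≥ μₓ + (σ/√n)·z`, the false-alarm event is contained in the event that this mean exceeds
its expectation by `z` standard deviations, whose probability is the standard Gaussian tail
`1 - Φ(z)`. -/

namespace ProbabilityTheory

lemma measureReal_Ici_eq_one_sub_cdf (μ : Measure ℝ) [IsProbabilityMeasure μ] {z : ℝ}
    (hz : μ {z} = 0) : μ.real (Ici z) = 1 - cdf μ z := by
  rw [← measureReal_congr (Ioi_ae_eq_Ici' hz), ← compl_Iic,
    probReal_compl_eq_one_sub measurableSet_Iic, cdf_eq_real]

lemma gaussianReal_singleton (m : ℝ) {v : ℝ≥0} (hv : v ≠ 0) (x : ℝ) :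
    gaussianReal m v {x} = 0 :=
  gaussianReal_absolutelyContinuous m hv (measure_singleton x)

lemma gaussianReal_zero_one_map_affine (m : ℝ) (v : ℝ≥0) :
    (gaussianReal 0 1).map (fun x ↦ m + √v * x) = gaussianReal m v := by
  have hcomp : (fun x ↦ m + √v * x) = (m + ·) ∘ (√v * ·) := rfl
  rw [hcomp, ← Measure.map_map (by fun_prop) (by fun_prop), gaussianReal_map_const_mul,
    gaussianReal_map_const_add, mul_zero, zero_add, mul_one]
  congr 1
  ext
  exact Real.sq_sqrt v.coe_nonneg

lemma measureReal_gaussianReal_Ici_add_sqrt_mul (m : ℝ) {v : ℝ≥0} (hv : v ≠ 0) (z : ℝ) :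
    (gaussianReal m v).real (Ici (m + √v * z)) = 1 - cdf (gaussianReal 0 1) z := by
  have hsqrt : 0 < √(v : ℝ) := Real.sqrt_pos.mpr (by positivity)
  have hpre : (fun x ↦ m + √v * x) ⁻¹' Ici (m + √v * z) = Ici z := by
    ext x
    simp [mul_le_mul_iff_right₀ hsqrt]
  rw [← gaussianReal_zero_one_map_affine m v,
    map_measureReal_apply (by fun_prop) measurableSet_Ici, hpre,
    measureReal_Ici_eq_one_sub_cdf _ (gaussianReal_singleton 0 one_ne_zero z)]

variable {Ω ι : Type*} [MeasurableSpace Ω] {P : Measure Ω} {X : ι → Ω → ℝ}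

lemma aemeasurable_of_map_eq_gaussianReal {Y : Ω → ℝ} {m : ℝ} {v : ℝ≥0}
    (h : P.map Y = gaussianReal m v) : AEMeasurable Y P :=
  AEMeasurable.of_map_ne_zero (h ▸ NeZero.ne _)

lemma map_finsetSum_eq_gaussianReal_of_iIndepFun [IsProbabilityMeasure P] {m : ι → ℝ}
    {v : ι → ℝ≥0} (hindep : iIndepFun X P) (hlaw : ∀ i, P.map (X i) = gaussianReal (m i) (v i))
    (s : Finset ι) :
    P.map (∑ i ∈ s, X i) = gaussianReal (∑ i ∈ s, m i) (∑ i ∈ s, v i) := by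
  classical
  induction s using Finset.cons_induction with
  | empty => simp [Pi.zero_def, Measure.map_const, gaussianReal_zero_var]
  | cons i s hi ih =>
    have hmeas j := aemeasurable_of_map_eq_gaussianReal (hlaw j)
    rw [Finset.sum_cons, Finset.sum_cons, Finset.sum_cons]
    exact gaussianReal_add_gaussianReal_of_indepFun
      (hindep.indepFun_finsetSum_of_notMem₀ hmeas hi).symm (hlaw i) ih

lemma map_sampleMean_eq_gaussianReal [Fintype ι] [Nonempty ι] [IsProbabilityMeasure P] {m : ℝ}
    {v : ℝ≥0} (hindep : iIndepFun X P) (hlaw : ∀ i, P.map (X i) = gaussianReal m v) :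
    P.map (fun ω ↦ (1 / (Fintype.card ι : ℝ)) * ∑ i, X i ω)
      = gaussianReal m (v / Fintype.card ι) := by
  have hsum := map_finsetSum_eq_gaussianReal_of_iIndepFun hindep hlaw Finset.univ
  have hcard : (0 : ℝ) < Fintype.card ι := by exact_mod_cast Fintype.card_pos
  have hcomp : (fun ω ↦ (1 / (Fintype.card ι : ℝ)) * ∑ i, X i ω)
      = ((1 / (Fintype.card ι : ℝ)) * ·) ∘ ∑ i, X i := by
    ext ω
    simp
  rw [hcomp, ← AEMeasurable.map_map_of_aemeasurable (by fun_prop)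
    (aemeasurable_of_map_eq_gaussianReal hsum), hsum, gaussianReal_map_const_mul]
  simp only [Finset.sum_const, Finset.card_univ, nsmul_eq_mul]
  congr 1
  · field_simp
  · ext
    push_cast
    field_simp

end ProbabilityTheory

theorem false_alarm_bound_general
    {Ω : Type*} [MeasurableSpace Ω] (P : Measure Ω) [IsProbabilityMeasure P]
    (σ : ℝ≥0) (hσ : 0 < σ) (ε z μx μhat : ℝ) (hμhat : μx - ε ≤ μhat)
    (n : ℕ) (hn : 1 ≤ n)
    (ΔC : ℝ) (hΔC : ΔC = ε + (σ : ℝ) * z / Real.sqrt n)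
    (X : Fin n → Ω → ℝ)
    (hindep : iIndepFun X P)
    (hlaw : ∀ i, Measure.map (X i) P = gaussianReal μx (σ ^ 2)) :
    (P {ω | μhat + ΔC ≤ (1 / (n : ℝ)) * ∑ i, X i ω}).toReal
      ≤ 1 - cdf (gaussianReal 0 1) z := by
  have : NeZero n := ⟨by omega⟩
  have hmean := map_sampleMean_eq_gaussianReal hindep hlaw
  rw [Fintype.card_fin] at hmean
  have hv : σ ^ 2 / n ≠ 0 := by positivity
  have hthreshold : μx + √(σ ^ 2 / n : ℝ≥0) * z ≤ μhat + ΔC := by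
    rw [hΔC, NNReal.coe_div, NNReal.coe_pow, NNReal.coe_natCast,
      Real.sqrt_div' _ (Nat.cast_nonneg n), Real.sqrt_sq σ.coe_nonneg]
    linarith [mul_div_right_comm (σ : ℝ) z (√n)]
  calc P.real {ω | μhat + ΔC ≤ (1 / (n : ℝ)) * ∑ i, X i ω}
      ≤ P.real {ω | μx + √(σ ^ 2 / n : ℝ≥0) * z ≤ (1 / (n : ℝ)) * ∑ i, X i ω} :=
        measureReal_mono fun ω hω ↦ le_trans hthreshold hω
    _ = 1 - cdf (gaussianReal 0 1) z := by
        rw [← measureReal_gaussianReal_Ici_add_sqrt_mul μx hv z, ← hmean,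
          map_measureReal_apply_of_aemeasurable _ measurableSet_Ici]
        · rfl
        · exact aemeasurable_of_map_eq_gaussianReal hmean

/-- False-alarm bound. With `μ̂ ≥ μ_x − ε` and threshold
`Δ_C = ε + σ·z/√n`, for `X_1, …, X_n` i.i.d. with law `gaussianReal μ_x σ²` (`σ > 0`),
`P((1/n) ∑ X_i ≥ μ̂ + Δ_C) ≤ 1 − Φ(z)` where `Φ` is the CDF of `gaussianReal 0 1`. -/
theorem false_alarm_bound
    {Ω : Type*} [MeasurableSpace Ω] (P : Measure Ω) [IsProbabilityMeasure P]
    (σ : ℝ≥0) (hσ : 0 < σ) (ε z μx μhat : ℝ) (hμhat : μx - ε ≤ μhat)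
    (n : ℕ) (hn : 1 ≤ n)
    (ΔC : ℝ) (hΔC : ΔC = ε + (σ : ℝ) * z / Real.sqrt n)
    (X : Fin n → Ω → ℝ) (hXmeas : ∀ i, Measurable (X i))
    (hindep : iIndepFun X P)
    (hlaw : ∀ i, Measure.map (X i) P = gaussianReal μx (σ ^ 2)) :
    (P {ω | μhat + ΔC ≤ (1 / (n : ℝ)) * ∑ i, X i ω}).toReal
      ≤ 1 - cdf (gaussianReal 0 1) z :=
  false_alarm_bound_general P σ hσ ε z μx μhat hμhat n hn ΔC hΔC X hindep hlaw
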